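/- arXiv:1805.01409 — 3 statements merged into one kernel-verified Lean document; each statement's English description precedes it below -/
import Mathlib

section
/- Let H be a finite group of odd order. Then the nim-number of the achievement game GEN(H) is *0 if |H| = 1, is *2 if |H| > 1 and d(H) ∈ {1,2}, and is *1 otherwise (i.e., if d(H) ≥ 3). -/
universe u

/-- `Nimber` as in the older Mathlib: a type synonym for `Ordinal`. -/
def Nimber : Type (u + 1) := Ordinal.{u}

namespace Nimber

noncomputable instance : InfSet Nimber.{u} := inferInstanceAs (InfSet Ordinal.{u})

end Nimber

/-- The identity map from `Ordinal` to `Nimber` (the older `Ordinal.toNimber`). -/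
def Ordinal.toNimber : Ordinal.{u} → Nimber.{u} := fun o => o

prefix:max "∗" => Ordinal.toNimber

namespace SetTheory

/-- Pre-games, as in the older Mathlib `SetTheory.PGame`. -/
inductive PGame : Type (u + 1)
  | mk : ∀ α β : Type u, (α → PGame) → (β → PGame) → PGame

namespace PGame

instance : Zero PGame.{u} := ⟨⟨PEmpty, PEmpty, PEmpty.elim, PEmpty.elim⟩⟩

/-- The Grundy value of an impartial game: the mex of the Grundy values of its (left) options. -/
noncomputable def grundyValue : PGame.{u} → Nimber.{u}
  | mk _ _ L _ => sInf (Set.range fun i => grundyValue (L i))ᶜ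

end PGame

end SetTheory

open SetTheory Nimber
open scoped Classical

/-- The achievement game `GEN(G)` of Anderson and Harary: positions are (finite) subsets
of the finite group `G`; a position that generates `G` is terminal, and otherwise the
options are obtained by selecting a previously-unselected element of `G`.  The game is
impartial, so the left and right options agree. -/
noncomputable def genGame {G : Type} [Group G] [Fintype G] (P : Finset G) : PGame :=
  if Subgroup.closure (P : Set G) = ⊤ then 0
  else
    PGame.mk {g : G // g ∉ P} {g : G // g ∉ P}
      (fun g => genGame (insert g.1 P)) (fun g => genGame (insert g.1 P))
termination_by Fintype.card G - P.card
decreasing_by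
  all_goals
    have h1 : (insert g.1 P).card = P.card + 1 := Finset.card_insert_of_notMem g.2
    have h2 : (insert g.1 P).card ≤ Fintype.card G := Finset.card_le_univ _
    omega

/-- The nim-number of the achievement game `GEN(G)`, i.e. the Sprague-Grundy value of the
starting position `∅`. -/
noncomputable def nimGEN (G : Type) [Group G] [Fintype G] : Nimber :=
  PGame.grundyValue (genGame (∅ : Finset G))

/-- `d(G)`: the minimal cardinality of a generating set of `G`. -/
noncomputable def minGen (G : Type) [Group G] : ℕ :=
  sInf {n : ℕ | ∃ S : Finset G, S.card = n ∧ Subgroup.closure (S : Set G) = ⊤}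

/-
The Grundy value of a position `P` of `GEN(G)` depends only on the subgroup
`K = ⟨P⟩` and on the parity of `|P|`: it is `0` if `K = G`; for `|P|` even it is `∗2` if `K`
together with at most two more elements generates `G` and `∗1` otherwise; for `|P|` odd it is
`∗1` if a single further element generates `G` with `K` and `0` otherwise. This is checked by
induction on the number of unselected elements, computing the mex over the options. The odd
order of `G` enters only once: a subgroup has odd order, so when `|P|` is even the selection
cannot exhaust `K`, and the player to move can always "pass" by selecting an element of `K`.
At `P = ∅` the two thresholds become `d(G) ≤ 2` and `d(G) ≤ 1`.
-/

open Subgroup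

namespace Subgroup

variable {G : Type} [Group G]

theorem sup_zpowers_of_mem {K : Subgroup G} {g : G} (hg : g ∈ K) : K ⊔ zpowers g = K :=
  sup_eq_left.mpr (zpowers_le.mpr hg)

theorem closure_insert_eq_sup_zpowers (g : G) (s : Set G) :
    closure (insert g s) = closure s ⊔ zpowers g := by
  rw [Set.insert_eq, closure_union, ← zpowers_eq_closure, sup_comm]

def GeneratesWithin (K : Subgroup G) (n : ℕ) : Prop :=
  ∃ s : Finset G, s.card ≤ n ∧ K ⊔ closure (s : Set G) = ⊤

theorem generatesWithin_zero_iff {K : Subgroup G} : K.GeneratesWithin 0 ↔ K = ⊤ := by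
  simp [GeneratesWithin]

theorem generatesWithin_succ_iff {K : Subgroup G} {n : ℕ} :
    K.GeneratesWithin (n + 1) ↔ ∃ g : G, (K ⊔ zpowers g).GeneratesWithin n := by
  constructor
  · rintro ⟨s, hs, hK⟩
    rcases s.eq_empty_or_nonempty with rfl | ⟨g, hg⟩
    · refine ⟨1, ∅, by simp, ?_⟩
      simpa using hK
    · refine ⟨g, s.erase g, by rw [Finset.card_erase_of_mem hg]; omega, ?_⟩
      rwa [sup_assoc, sup_comm (zpowers g), ← closure_insert_eq_sup_zpowers,
        ← Finset.coe_insert, Finset.insert_erase hg]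
  · rintro ⟨g, s, hs, hK⟩
    refine ⟨insert g s, (Finset.card_insert_le g s).trans (by omega), ?_⟩
    rwa [Finset.coe_insert, closure_insert_eq_sup_zpowers, sup_comm (closure _), ← sup_assoc]

theorem generatesWithin_one_iff {K : Subgroup G} :
    K.GeneratesWithin 1 ↔ ∃ g : G, K ⊔ zpowers g = ⊤ := by
  simp only [generatesWithin_succ_iff, generatesWithin_zero_iff]

theorem exists_notMem_sup_zpowers_eq_top {K : Subgroup G} (hK : K ≠ ⊤)
    (h1 : K.GeneratesWithin 1) : ∃ g ∉ K, K ⊔ zpowers g = ⊤ := by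
  obtain ⟨g, hg⟩ := generatesWithin_one_iff.mp h1
  exact ⟨g, fun hgK => hK (sup_zpowers_of_mem hgK ▸ hg), hg⟩

theorem sup_zpowers_ne_top {K : Subgroup G} (h1 : ¬ K.GeneratesWithin 1) (g : G) :
    K ⊔ zpowers g ≠ ⊤ :=
  fun htop => h1 (generatesWithin_one_iff.mpr ⟨g, htop⟩)

theorem exists_notMem_generatesWithin_one {K : Subgroup G} (h2 : K.GeneratesWithin 2)
    (h1 : ¬ K.GeneratesWithin 1) : ∃ g ∉ K, (K ⊔ zpowers g).GeneratesWithin 1 := by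
  obtain ⟨g, hg⟩ := generatesWithin_succ_iff.mp h2
  exact ⟨g, fun hgK => h1 (sup_zpowers_of_mem hgK ▸ hg), hg⟩

theorem GeneratesWithin.mono {K L : Subgroup G} {m n : ℕ} (hKL : K ≤ L) (hmn : m ≤ n)
    (hK : K.GeneratesWithin m) : L.GeneratesWithin n :=
  let ⟨s, hs, hsK⟩ := hK
  ⟨s, hs.trans hmn, top_le_iff.mp (hsK ▸ sup_le_sup_right hKL _)⟩

theorem generatesWithin_bot_iff [Fintype G] {n : ℕ} :
    (⊥ : Subgroup G).GeneratesWithin n ↔ minGen G ≤ n := by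
  have hne : {m | ∃ S : Finset G, S.card = m ∧ closure (S : Set G) = ⊤}.Nonempty :=
    ⟨_, Finset.univ, rfl, by rw [Finset.coe_univ, closure_univ]⟩
  simp only [GeneratesWithin, bot_sup_eq]
  constructor
  · rintro ⟨s, hs, hsG⟩
    exact le_trans (Nat.sInf_le ⟨s, rfl, hsG⟩) hs
  · intro hn
    obtain ⟨S, hS, hSG⟩ := Nat.sInf_mem hne
    exact ⟨S, hS.trans_le hn, hSG⟩

/-- In a group of odd order no subgroup has an even number of elements. -/
theorem exists_mem_closure_notMem_of_odd_card [Fintype G] (hG : Odd (Fintype.card G))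
    {P : Finset G} (hP : Even P.card) : ∃ g ∈ closure (P : Set G), g ∉ P := by
  by_contra! hsub
  have hcard : Nat.card (closure (P : Set G)) = P.card := by
    rw [← SetLike.coe_sort_coe, Nat.card_coe_set_eq,
      (subset_closure).antisymm' (fun g hg => hsub g hg), Set.ncard_coe_finset]
  have hodd : Odd (Nat.card (closure (P : Set G))) :=
    hG.of_dvd_nat (Nat.card_eq_fintype_card (α := G) ▸ card_subgroup_dvd_card _)
  exact Nat.not_odd_iff_even.mpr hP (hcard ▸ hodd)

end Subgroup

theorem Ordinal.sInf_compl_range_eq {ι : Type*} (f : ι → Ordinal) {a : Ordinal}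
    (hlt : ∀ b < a, b ∈ Set.range f) (ha : a ∉ Set.range f) : sInf (Set.range f)ᶜ = a :=
  IsLeast.csInf_eq ⟨ha, fun b hb => not_lt.mp fun hba => hb (hlt b hba)⟩

theorem Ordinal.toNimber_inj {a b : Ordinal} : ∗a = ∗b ↔ a = b := Iff.rfl

namespace SetTheory.PGame

theorem grundyValue_mk_eq {α β : Type u} (L : α → PGame.{u}) (R : β → PGame.{u})
    {a : Ordinal.{u}} (hlt : ∀ b < a, ∃ i, grundyValue (L i) = ∗b)
    (ha : ∀ i, grundyValue (L i) ≠ ∗a) : grundyValue (mk α β L R) = ∗a := by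
  rw [grundyValue]
  exact Ordinal.sInf_compl_range_eq (fun i => grundyValue (L i)) hlt fun ⟨i, hi⟩ => ha i hi

theorem grundyValue_zero : grundyValue (0 : PGame.{u}) = ∗0 :=
  grundyValue_mk_eq _ _ (fun _ hb => absurd hb zero_le.not_gt) fun i => i.elim

end SetTheory.PGame

section GenNimValue

variable {G : Type} [Group G]

noncomputable def genNimValue (K : Subgroup G) (n : ℕ) : Nimber :=
  if K = ⊤ then ∗0
  else if Even n then (if K.GeneratesWithin 2 then ∗2 else ∗1)
  else if K.GeneratesWithin 1 then ∗1 else ∗0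

theorem genNimValue_top (n : ℕ) : genNimValue (⊤ : Subgroup G) n = ∗0 := if_pos rfl

theorem genNimValue_of_even {K : Subgroup G} (hK : K ≠ ⊤) {n : ℕ} (hn : Even n) :
    genNimValue K n = if K.GeneratesWithin 2 then ∗2 else ∗1 := by
  rw [genNimValue, if_neg hK, if_pos hn]

theorem genNimValue_of_odd {K : Subgroup G} (hK : K ≠ ⊤) {n : ℕ} (hn : Odd n) :
    genNimValue K n = if K.GeneratesWithin 1 then ∗1 else ∗0 := by
  rw [genNimValue, if_neg hK, if_neg (Nat.not_even_iff_odd.mpr hn)]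

end GenNimValue

section GenGame

variable {G : Type} [Group G] [Fintype G]

theorem grundyValue_genGame_eq {P : Finset G} (hP : closure (P : Set G) ≠ ⊤) {a : Ordinal}
    (hlt : ∀ b < a, ∃ g ∉ P, PGame.grundyValue (genGame (insert g P)) = ∗b)
    (ha : ∀ g ∉ P, PGame.grundyValue (genGame (insert g P)) ≠ ∗a) :
    PGame.grundyValue (genGame P) = ∗a := by
  rw [genGame, if_neg hP]
  refine PGame.grundyValue_mk_eq _ _ (fun b hb => ?_) fun g => ha g.1 g.2
  obtain ⟨g, hg, hgb⟩ := hlt b hb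
  exact ⟨⟨g, hg⟩, hgb⟩

theorem grundyValue_genGame_of_odd {P : Finset G} (hP : closure (P : Set G) ≠ ⊤)
    (hodd : Odd P.card)
    (hopt : ∀ g ∉ P, PGame.grundyValue (genGame (insert g P)) =
      genNimValue (closure (P : Set G) ⊔ zpowers g) (P.card + 1)) :
    PGame.grundyValue (genGame P) = genNimValue (closure (P : Set G)) P.card := by
  set K := closure (P : Set G)
  have heven : Even (P.card + 1) := hodd.add_one
  rw [genNimValue_of_odd hP hodd]
  split_ifs with h1
  · obtain ⟨g, hgK, hg⟩ := exists_notMem_sup_zpowers_eq_top hP h1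
    have hgP : g ∉ P := fun hgP => hgK (subset_closure hgP)
    refine grundyValue_genGame_eq hP (fun b hb => ⟨g, hgP, ?_⟩) fun g' hg' => ?_
    · rw [Order.lt_one_iff.mp hb, hopt g hgP, hg, genNimValue_top]
    · have h2 : (K ⊔ zpowers g').GeneratesWithin 2 := h1.mono le_sup_left one_le_two
      rw [hopt g' hg', genNimValue, if_pos heven, if_pos h2]
      split_ifs <;> simp [Ordinal.toNimber_inj]
  · refine grundyValue_genGame_eq hP (fun b hb => absurd hb zero_le.not_gt) fun g hg => ?_
    rw [hopt g hg, genNimValue, if_neg (sup_zpowers_ne_top h1 g), if_pos heven]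
    split_ifs <;> simp [Ordinal.toNimber_inj]

theorem grundyValue_genGame_of_even (hG : Odd (Fintype.card G)) {P : Finset G}
    (hP : closure (P : Set G) ≠ ⊤) (heven : Even P.card)
    (hopt : ∀ g ∉ P, PGame.grundyValue (genGame (insert g P)) =
      genNimValue (closure (P : Set G) ⊔ zpowers g) (P.card + 1)) :
    PGame.grundyValue (genGame P) = genNimValue (closure (P : Set G)) P.card := by
  set K := closure (P : Set G)
  have hodd : Odd (P.card + 1) := heven.add_one
  have hKP : ∀ g ∉ K, g ∉ P := fun g hgK hgP => hgK (subset_closure hgP)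
  obtain ⟨g₀, hg₀K, hg₀P⟩ := exists_mem_closure_notMem_of_odd_card hG heven
  have hpass : PGame.grundyValue (genGame (insert g₀ P)) =
      if K.GeneratesWithin 1 then ∗1 else ∗0 := by
    rw [hopt g₀ hg₀P, sup_zpowers_of_mem hg₀K, genNimValue_of_odd hP hodd]
  rw [genNimValue_of_even hP heven]
  split_ifs with h2
  · refine grundyValue_genGame_eq hP (fun b hb => ?_) fun g hg => ?_
    · by_cases h1 : K.GeneratesWithin 1
      · obtain ⟨g, hgK, hg⟩ := exists_notMem_sup_zpowers_eq_top hP h1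
        rcases Order.le_one_iff.mp (Order.lt_two_iff.mp hb) with rfl | rfl
        · exact ⟨g, hKP g hgK, by rw [hopt g (hKP g hgK), hg, genNimValue_top]⟩
        · exact ⟨g₀, hg₀P, by rw [hpass, if_pos h1]⟩
      · obtain ⟨g, hgK, hg⟩ := exists_notMem_generatesWithin_one h2 h1
        rcases Order.le_one_iff.mp (Order.lt_two_iff.mp hb) with rfl | rfl
        · exact ⟨g₀, hg₀P, by rw [hpass, if_neg h1]⟩
        · refine ⟨g, hKP g hgK, ?_⟩
          rw [hopt g (hKP g hgK), genNimValue_of_odd (sup_zpowers_ne_top h1 g) hodd, if_pos hg]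
    · rw [hopt g hg, genNimValue, if_neg (Nat.not_even_iff_odd.mpr hodd)]
      split_ifs <;> simp [Ordinal.toNimber_inj]
  · have h1 : ¬ K.GeneratesWithin 1 := fun h1 => h2 (h1.mono le_rfl one_le_two)
    refine grundyValue_genGame_eq hP (fun b hb => ⟨g₀, hg₀P, ?_⟩) fun g hg => ?_
    · rw [Order.lt_one_iff.mp hb, hpass, if_neg h1]
    · have h1' : ¬ (K ⊔ zpowers g).GeneratesWithin 1 := fun h1' =>
        h2 (generatesWithin_succ_iff.mpr ⟨g, h1'⟩)
      rw [hopt g hg, genNimValue_of_odd (sup_zpowers_ne_top h1 g) hodd, if_neg h1']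
      simp [Ordinal.toNimber_inj]

theorem grundyValue_genGame (hG : Odd (Fintype.card G)) (P : Finset G) :
    PGame.grundyValue (genGame P) = genNimValue (closure (P : Set G)) P.card := by
  have hopt : ∀ g ∉ P, PGame.grundyValue (genGame (insert g P)) =
      genNimValue (closure (P : Set G) ⊔ zpowers g) (P.card + 1) := fun g hg => by
    rw [grundyValue_genGame hG (insert g P), Finset.card_insert_of_notMem hg, Finset.coe_insert,
      closure_insert_eq_sup_zpowers]
  by_cases hP : closure (P : Set G) = ⊤
  · rw [genGame, if_pos hP, hP, genNimValue_top, PGame.grundyValue_zero]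
  rcases Nat.even_or_odd P.card with heven | hodd
  · exact grundyValue_genGame_of_even hG hP heven hopt
  · exact grundyValue_genGame_of_odd hP hodd hopt
termination_by Fintype.card G - P.card
decreasing_by
  have := Finset.card_insert_of_notMem hg
  have := (insert g P).card_le_univ
  omega

end GenGame

theorem nimGEN_odd_order (H : Type) [Group H] [Fintype H] (hH : Odd (Fintype.card H)) :
    nimGEN H =
      if Fintype.card H = 1 then ∗0
      else if 1 < Fintype.card H ∧ (minGen H = 1 ∨ minGen H = 2) then ∗2
      else ∗1 := by
  rw [nimGEN, grundyValue_genGame hH, Finset.coe_empty, Subgroup.closure_empty, Finset.card_empty]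
  by_cases h1 : Fintype.card H = 1
  · have : Subsingleton H := Fintype.card_le_one_iff_subsingleton.mp h1.le
    rw [if_pos h1, Subsingleton.elim (⊥ : Subgroup H) ⊤, genNimValue_top]
  have hlt : 1 < Fintype.card H := lt_of_le_of_ne Fintype.card_pos (Ne.symm h1)
  have : Nontrivial H := Fintype.one_lt_card_iff_nontrivial.mp hlt
  have hd : minGen H ≠ 0 := fun hd =>
    bot_ne_top (generatesWithin_zero_iff.mp (generatesWithin_bot_iff.mpr hd.le))
  rw [if_neg h1, genNimValue_of_even bot_ne_top Even.zero, generatesWithin_bot_iff]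
  have hclass : minGen H ≤ 2 ↔ 1 < Fintype.card H ∧ (minGen H = 1 ∨ minGen H = 2) := by omega
  simp only [hclass]
end

section
/- Let H be a finite group of odd order and let y, v ∈ H and u ∈ Z/2. If the set {(0,y), (1,e), (u,v)} generates Z/2 × H (where e is the identity of H and Z/2 is written additively), then the set {(0,y), (1,v)} generates Z/2 × H. -/
/-! Write `a = (1, e)` and `b = (0, v)`, so that `(1, v) = a * b`. Since `a` is a central involution,
`(a * b) ^ 2 = b ^ 2`, and `b` has odd order, hence lies in the cyclic group generated by `b ^ 2`.
So both `b` and `a` are powers of `(1, v)`, and `{(0, y), (1, v)}` generates every element of the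
generating set `{(0, y), (1, e), (u, v)}`. -/

theorem mem_zpowers_sq_of_odd_orderOf {G : Type*} [Group G] {g : G} (hg : Odd (orderOf g)) :
    g ∈ Subgroup.zpowers (g ^ 2) :=
  mem_zpowers_pow_iff.mpr hg.coprime_two_left

theorem mem_zpowers_mul_of_sq_eq_one_of_odd_orderOf {G : Type*} [Group G] {a b : G}
    (hab : Commute a b) (ha : a ^ 2 = 1) (hb : Odd (orderOf b)) :
    b ∈ Subgroup.zpowers (a * b) ∧ a ∈ Subgroup.zpowers (a * b) := by
  have hsq : (a * b) ^ 2 = b ^ 2 := by rw [hab.mul_pow, ha, one_mul]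
  have hb_mem : b ∈ Subgroup.zpowers (a * b) :=
    Subgroup.zpowers_le.mpr (hsq ▸ Subgroup.pow_mem _ (Subgroup.mem_zpowers _) 2)
      (mem_zpowers_sq_of_odd_orderOf hb)
  refine ⟨hb_mem, ?_⟩
  simpa using Subgroup.mul_mem _ (Subgroup.mem_zpowers (a * b)) (Subgroup.inv_mem _ hb_mem)

theorem generating_pair_from_triple (H : Type) [Group H] [Fintype H]
    (hH : Odd (Fintype.card H)) (y v : H) (u : ZMod 2)
    (hgen : Subgroup.closure
        ({(Multiplicative.ofAdd (0 : ZMod 2), y), (Multiplicative.ofAdd (1 : ZMod 2), (1 : H)),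
          (Multiplicative.ofAdd u, v)} : Set (Multiplicative (ZMod 2) × H)) = ⊤) :
    Subgroup.closure
        ({(Multiplicative.ofAdd (0 : ZMod 2), y), (Multiplicative.ofAdd (1 : ZMod 2), v)} :
          Set (Multiplicative (ZMod 2) × H)) = ⊤ := by
  set K := Subgroup.closure
    ({(Multiplicative.ofAdd (0 : ZMod 2), y), (Multiplicative.ofAdd (1 : ZMod 2), v)} :
      Set (Multiplicative (ZMod 2) × H))
  set a : Multiplicative (ZMod 2) × H := (Multiplicative.ofAdd 1, 1)
  set b : Multiplicative (ZMod 2) × H := (1, v)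
  have hb : Odd (orderOf b) := by
    simpa [b, Prod.orderOf_mk] using hH.of_dvd_nat orderOf_dvd_card
  have ha : a ^ 2 = 1 := by rw [Prod.pow_mk, one_pow]; rfl
  have hab : a * b = (Multiplicative.ofAdd 1, v) := by simp [a, b]
  have hK : Subgroup.zpowers (a * b) ≤ K :=
    Subgroup.zpowers_le.mpr (Subgroup.subset_closure (by simp [hab]))
  obtain ⟨hb_mem, ha_mem⟩ := mem_zpowers_mul_of_sq_eq_one_of_odd_orderOf
    (Commute.prod (Commute.all _ _) (Commute.one_left v)) ha hb
  rw [eq_top_iff, ← hgen, Subgroup.closure_le]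
  rintro x (rfl | rfl | rfl)
  · exact Subgroup.subset_closure (by simp)
  · exact hK ha_mem
  · fin_cases u
    · exact hK hb_mem
    · exact hK (hab ▸ Subgroup.mem_zpowers (a * b))
end

section
/- Let H be a finite group of odd order with d(H) = 2 and let t be a nontrivial element of Z/2 × Z/2. Then δ_{(Z/2×Z/2)×H}(⟨t⟩ × Φ(H)) = 2, where ⟨t⟩ × Φ(H) is the subset of (Z/2 × Z/2) × H consisting of pairs (a,b) with a ∈ ⟨t⟩ and b in the Frattini subgroup Φ(H) of H. -/
/-- The deficiency `δ_G(P)` of a subset `P` of a finite group `G`: the least cardinality of a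
finite subset `Q ⊆ G` such that `P ∪ Q` generates `G`. -/
noncomputable def deficiency (G : Type) [Group G] (P : Set G) : ℕ :=
  sInf {n : ℕ | ∃ Q : Finset G, Q.card = n ∧ Subgroup.closure (P ∪ ↑Q) = ⊤}

section Aux

local notation "V" => Multiplicative (ZMod 2) × Multiplicative (ZMod 2)

set_option synthInstance.maxSize 1000 in
private lemma aux_four (t s x : V) (ht : t ≠ 1) (hs : s ≠ 1) (hst : s ≠ t) :
    x = 1 ∨ x = t ∨ x = s ∨ x = t * s := by revert t s x; decide

set_option synthInstance.maxSize 1000 in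
private lemma aux_sq (v : V) : v ^ 2 = 1 := by revert v; decide

set_option synthInstance.maxSize 1000 in
private lemma aux_exists (t : V) : ∃ s : V, s ≠ 1 ∧ s ≠ t := by revert t; decide

private lemma aux_top (t s : V) (ht : t ≠ 1) (hs : s ≠ 1) (hst : s ≠ t)
    (K : Subgroup V) (htK : t ∈ K) (hsK : s ∈ K) : K = ⊤ := by
  rw [Subgroup.eq_top_iff']
  intro x
  rcases aux_four t s x ht hs hst with rfl | rfl | rfl | rfl
  · exact K.one_mem
  · exact htK
  · exact hsK
  · exact K.mul_mem htK hsK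

/-- If the Frattini subgroup together with a finset generates a finite group with
`minGen = 2`, the finset has at least 2 elements. -/
private lemma aux_lower (H : Type) [Group H] [Fintype H] (hd : minGen H = 2)
    (S : Finset H) (hS : Subgroup.closure ((frattini H : Set H) ∪ ↑S) = ⊤) :
    2 ≤ S.card := by
  rw [Subgroup.closure_union, Subgroup.closure_eq, sup_comm] at hS
  have h2 : Subgroup.closure (S : Set H) = ⊤ := frattini_nongenerating hS
  have : minGen H ≤ S.card := Nat.sInf_le ⟨S, rfl, h2⟩
  omega

theorem deficiency_cyclic_times_frattini (H : Type) [Group H] [Fintype H]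
    (hH : Odd (Fintype.card H)) (hd : minGen H = 2)
    (t : Multiplicative (ZMod 2) × Multiplicative (ZMod 2)) (ht : t ≠ 1) :
    deficiency ((Multiplicative (ZMod 2) × Multiplicative (ZMod 2)) × H)
      ((Subgroup.closure {t} : Set (Multiplicative (ZMod 2) × Multiplicative (ZMod 2))) ×ˢ
        (frattini H : Set H)) = 2 := by
  classical
  set P : Set (V × H) :=
    (Subgroup.closure {t} : Set V) ×ˢ (frattini H : Set H) with hP
  -- the defining set
  set D : Set ℕ :=
    {n : ℕ | ∃ Q : Finset (V × H), Q.card = n ∧ Subgroup.closure (P ∪ ↑Q) = ⊤} with hD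
  -- lower bound: every element of D is ≥ 2
  have hlb : ∀ n ∈ D, 2 ≤ n := by
    rintro n ⟨Q, hQcard, hQtop⟩
    have hmap : Subgroup.map (MonoidHom.snd V H) (Subgroup.closure (P ∪ ↑Q)) = ⊤ := by
      rw [hQtop]
      exact Subgroup.map_top_of_surjective _ Prod.snd_surjective
    rw [MonoidHom.map_closure] at hmap
    have himg : (MonoidHom.snd V H) '' (P ∪ ↑Q)
        = (frattini H : Set H) ∪ ↑(Q.image Prod.snd) := by
      rw [Set.image_union, Finset.coe_image]
      congr 1
      have : ((Subgroup.closure {t} : Subgroup V) : Set V).Nonempty :=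
        ⟨1, Subgroup.one_mem _⟩
      exact Set.snd_image_prod this _
    rw [himg] at hmap
    have := aux_lower H hd (Q.image Prod.snd) hmap
    have hle : (Q.image Prod.snd).card ≤ Q.card := Finset.card_image_le
    omega
  -- get generators of H
  have hne : minGen H ∈ {n : ℕ | ∃ S : Finset H, S.card = n ∧
      Subgroup.closure (S : Set H) = ⊤} := by
    apply Nat.sInf_mem
    exact ⟨Fintype.card H, Finset.univ, rfl, by simp⟩
  rw [hd] at hne
  obtain ⟨S, hScard, hStop⟩ := hne
  obtain ⟨h1, h2, hh12, hSeq⟩ := Finset.card_eq_two.mp hScard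
  rw [hSeq] at hStop
  -- pick s outside ⟨t⟩
  obtain ⟨s, hs1, hst⟩ := aux_exists t
  -- the two extra generators
  set Q : Finset (V × H) := {(s, h1), ((1 : V), h2)} with hQ
  have hQcard : Q.card = 2 := by
    rw [hQ, Finset.card_insert_of_notMem, Finset.card_singleton]
    simp only [Finset.mem_singleton]
    intro h
    exact hs1 (congrArg Prod.fst h)
  have hQtop : Subgroup.closure (P ∪ ↑Q) = ⊤ := by
    set K := Subgroup.closure (P ∪ ↑Q) with hK
    have hsh1 : ((s, h1) : V × H) ∈ K :=
      Subgroup.subset_closure (Or.inr (by simp [hQ]))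
    have h1h2 : (((1 : V), h2) : V × H) ∈ K :=
      Subgroup.subset_closure (Or.inr (by simp [hQ]))
    have ht1 : ((t, (1 : H)) : V × H) ∈ K := by
      apply Subgroup.subset_closure
      exact Or.inl ⟨Subgroup.subset_closure rfl, Subgroup.one_mem _⟩
    -- use odd order to get (1, h1) ∈ K
    obtain ⟨j, hj⟩ := hH
    have hpow : (((s, h1) : V × H) ^ 2) ^ (j + 1) = ((1 : V), h1) := by
      rw [← pow_mul]
      have : ((s, h1) : V × H) ^ (2 * (j + 1)) = (s ^ (2 * (j + 1)), h1 ^ (2 * (j + 1))) :=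
        Prod.pow_mk _ _ _
      rw [this]
      have hsv : s ^ (2 * (j + 1)) = 1 := by
        rw [mul_comm, pow_mul, aux_sq]
      have hh : h1 ^ (2 * (j + 1)) = h1 := by
        have : 2 * (j + 1) = Fintype.card H + 1 := by omega
        rw [this, pow_succ, pow_card_eq_one, one_mul]
      rw [hsv, hh]
    have h1mem : (((1 : V), h1) : V × H) ∈ K := by
      rw [← hpow]; exact pow_mem (pow_mem hsh1 2) (j + 1)
    have hsmem : ((s, (1 : H)) : V × H) ∈ K := by
      have := K.mul_mem hsh1 (K.inv_mem h1mem)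
      simpa using this
    rw [Subgroup.eq_top_iff']
    rintro ⟨x, y⟩
    have hx : ((x, (1 : H)) : V × H) ∈ K := by
      have hcomap : K.comap (MonoidHom.inl V H) = ⊤ :=
        aux_top t s ht hs1 hst _ (by simpa using ht1) (by simpa using hsmem)
      have : x ∈ K.comap (MonoidHom.inl V H) := by rw [hcomap]; trivial
      simpa using this
    have hy : (((1 : V), y) : V × H) ∈ K := by
      have hcomap : (⊤ : Subgroup H) ≤ K.comap (MonoidHom.inr V H) := by
        rw [← hStop]
        apply Subgroup.closure_le _ |>.mpr
        intro z hz
        simp only [Finset.coe_insert, Finset.coe_singleton, Set.mem_insert_iff,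
          Set.mem_singleton_iff] at hz
        rcases hz with rfl | rfl
        · simpa using h1mem
        · simpa using h1h2
      have : y ∈ K.comap (MonoidHom.inr V H) := hcomap trivial
      simpa using this
    have : ((x, y) : V × H) = (x, (1 : H)) * ((1 : V), y) := by
      simp
    rw [this]
    exact K.mul_mem hx hy
  have h2D : 2 ∈ D := ⟨Q, hQcard, hQtop⟩
  exact le_antisymm (Nat.sInf_le h2D) (le_csInf ⟨2, h2D⟩ hlb)

end Aux
end
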